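/- arXiv:1610.01253 — 2 statements merged into one kernel-verified Lean document; each statement's English description precedes it below -/
import Mathlib

section
/- For all nonnegative integers h and i, the sum ∑_{j=0}^{h} (-1)^j C(h,j) C(2j,i) equals (-1)^h 2^{2h-i} C(h, i-h), where C(n,k) denotes the binomial coefficient (taken to be 0 when k < 0 or k > n). -/
/-!
The sum is the coefficient of `X ^ i` in `∑ j, (-1) ^ j * C(h, j) * (X + 1) ^ (2 * j)`, which by the
binomial theorem is `(1 - (X + 1) ^ 2) ^ h = (-1) ^ h * X ^ h * (X + 2) ^ h`; the coefficient of
`X ^ i` in the latter is `(-1) ^ h * 2 ^ (2 * h - i) * C(h, i - h)`, read off by expanding `(X + 2) ^ h`.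
-/

open Polynomial Finset

theorem sum_neg_one_pow_mul_choose_mul_pow_two_mul {R : Type*} [CommRing R] (y : R) (h : ℕ) :
    ∑ j ∈ range (h + 1), (-1 : R) ^ j * h.choose j * y ^ (2 * j) = (1 - y ^ 2) ^ h := by
  rw [sub_eq_neg_add, add_pow]
  refine sum_congr rfl fun j _ => ?_
  rw [one_pow, mul_one, neg_pow, pow_mul]
  ring

theorem coeff_X_pow_mul_X_add_C_pow {R : Type*} [CommSemiring R] (r : R) (m n i : ℕ) :
    (X ^ m * (X + C r) ^ n).coeff i = if i < m then 0 else r ^ (n - (i - m)) * n.choose (i - m) := by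
  rw [coeff_X_pow_mul', coeff_X_add_C_pow]
  split_ifs <;> first | rfl | omega

theorem sum_neg_one_pow_mul_choose_mul_choose_two_mul {R : Type*} [CommRing R] (h i : ℕ) :
    ∑ j ∈ range (h + 1), (-1 : R) ^ j * h.choose j * (2 * j).choose i =
      (-1) ^ h * if i < h then 0 else (2 : R) ^ (h - (i - h)) * h.choose (i - h) := by
  have key : ∑ j ∈ range (h + 1), C ((-1 : R) ^ j * h.choose j) * (X + 1) ^ (2 * j) =
      C ((-1 : R) ^ h) * (X ^ h * (X + C 2) ^ h) := by
    have : 1 - (X + 1 : R[X]) ^ 2 = -1 * (X * (X + C 2)) := by rw [map_ofNat]; ring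
    simp only [map_mul, map_pow, map_neg, map_one, map_natCast]
    rw [sum_neg_one_pow_mul_choose_mul_pow_two_mul, this, mul_pow, mul_pow]
  have := congrArg (coeff · i) key
  simpa only [finsetSum_coeff, coeff_C_mul, coeff_X_add_one_pow, coeff_X_pow_mul_X_add_C_pow]
    using this

/-- `∑_{j=0}^{h} (-1)^j C(h,j) C(2j,i) = (-1)^h 2^{2h-i} C(h, i-h)`,
where the binomial coefficient is `0` when the lower index is negative or exceeds the upper. -/
theorem alternating_binomial_sum (h i : ℕ) :
    ∑ j ∈ Finset.range (h + 1), (-1 : ℝ) ^ j * (h.choose j) * ((2 * j).choose i) =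
      (-1 : ℝ) ^ h * (2 : ℝ) ^ ((2 * h : ℤ) - i) *
        (if i < h then 0 else (h.choose (i - h) : ℝ)) := by
  rw [sum_neg_one_pow_mul_choose_mul_choose_two_mul, mul_assoc]
  congr 1
  rcases lt_or_ge i h with hi | hi
  · simp [hi]
  rcases le_or_gt i (2 * h) with hi' | hi'
  · have : (2 * h : ℤ) - i = (h - (i - h) : ℕ) := by omega
    simp [hi.not_gt, this]
  · simp [Nat.choose_eq_zero_of_lt (by omega : h < i - h)]
end

section
/- The polynomial S_k(y) = ∑_{h=0}^{ℓ'} (-1)^h C(ℓ,h) (∑_{j=0}^{h} (-1)^j C(h,j) K_{2j}(k)) y^h, written in the basis {(1-2y)^j}, has all nonnegative coefficients when k is even, and equals (1-2y) times a polynomial in (1-2y)^2 with nonnegative coefficients when k is odd. Consequently, for each k with 0 ≤ k ≤ 2ℓ-1, the ratio S_{k+1}(y)/S_k(y) is nonnegative for y ∈ [0,1/2) and nonpositive for y ∈ (1/2,1]. -/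
/-!
Put `u = 1 - 2y`. For integers `0 ≤ x ≤ N`, `C(N,x) K_n(x)` is the coefficient of `tˣ` in
`(1 - t)ⁿ (1 + t)^(N-n)`: both sides satisfy the three-term recurrence in `x` given by the
difference equation of `K_n`, and they agree at `x = 0`. Substituting this into the definition of
`S_k` and applying the binomial theorem twice gives
`C(2ℓ,k) S_k(y) = [tᵏ] (y (1-t)² + (1-y) (1+t)²)^ℓ = [tᵏ] (1 + 2ut + t²)^ℓ`.
Expanding `((1 + t²) + 2ut)^ℓ` binomially, the coefficient of `tᵏ` is a polynomial in `u` with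
nonnegative coefficients in which only powers `u^b` with `b ≡ k (mod 2)` occur. Hence
`S_{k+1}/S_k` is `u` times a nonnegative number.
-/

/-- Pochhammer (rising factorial) symbol `(a)_n = a(a+1)⋯(a+n-1)`. -/
noncomputable def poch (a : ℝ) (n : ℕ) : ℝ := ∏ i ∈ Finset.range n, (a + i)

/-- Krawtchouk polynomial `K_n(x; 1/2, N)`. -/
noncomputable def kraw (N : ℕ) (n : ℕ) (x : ℝ) : ℝ :=
  ∑ i ∈ Finset.range (n + 1),
    poch (-(n : ℝ)) i * poch (-x) i / (poch (-(N : ℝ)) i * (Nat.factorial i)) * 2 ^ i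

/-- `S_k(y) = (Ψ₀)_{k,ℓ}(y) = ∑_{h=0}^{ℓ} (-1)^h C(ℓ,h) (∑_{j=0}^{h} (-1)^j C(h,j) K_{2j}(k)) y^h`. -/
noncomputable def Scol (ℓ k : ℕ) (y : ℝ) : ℝ :=
  ∑ h ∈ Finset.range (ℓ + 1),
    ((-1 : ℝ) ^ h * (ℓ.choose h) *
        ∑ j ∈ Finset.range (h + 1), (-1 : ℝ) ^ j * (h.choose j) * kraw (2 * ℓ) (2 * j) k) * y ^ h

open Finset Polynomial

@[simp]
theorem poch_zero (a : ℝ) : poch a 0 = 1 := prod_range_zero _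

theorem poch_succ (a : ℝ) (n : ℕ) : poch a (n + 1) = poch a n * (a + n) :=
  prod_range_succ _ _

theorem poch_succ_eq_mul_poch_add_one (a : ℝ) (n : ℕ) : poch a (n + 1) = a * poch (a + 1) n := by
  rw [poch, prod_range_succ', poch, mul_comm]
  congr 1
  · simp
  · exact prod_congr rfl fun i _ => by push_cast; ring

theorem poch_neg_natCast_ne_zero {N m : ℕ} (h : m ≤ N) : poch (-(N : ℝ)) m ≠ 0 := by
  refine prod_ne_zero_iff.mpr fun i hi => ?_
  have : (i : ℝ) < N := by exact_mod_cast (mem_range.mp hi).trans_le h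
  linarith

noncomputable def krawCoeff (N n i : ℕ) : ℝ :=
  poch (-(n : ℝ)) i * 2 ^ i / (poch (-(N : ℝ)) i * i.factorial)

theorem kraw_eq_sum_krawCoeff (N n : ℕ) (x : ℝ) :
    kraw N n x = ∑ i ∈ range (n + 1), krawCoeff N n i * poch (-x) i :=
  sum_congr rfl fun i _ => by rw [krawCoeff]; ring

theorem krawCoeff_zero (N n : ℕ) : krawCoeff N n 0 = 1 := by simp [krawCoeff, poch]

theorem krawCoeff_succ_mul {N n m : ℕ} (hm : m < N) :
    krawCoeff N n (m + 1) * (m + 1) * (N - m) = 2 * (n - m) * krawCoeff N n m := by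
  have h₁ := poch_neg_natCast_ne_zero hm.le
  have h₂ : -(N : ℝ) + m ≠ 0 := by
    have : (m : ℝ) < N := by exact_mod_cast hm
    linarith
  have h₃ : (m.factorial : ℝ) ≠ 0 := by positivity
  rw [krawCoeff, krawCoeff, poch_succ, poch_succ, Nat.factorial_succ]
  push_cast
  field_simp
  ring

theorem kraw_difference_eq (N n : ℕ) (hn : n ≤ N) (x : ℝ) :
    (N - x) * kraw N n (x + 1) + x * kraw N n (x - 1) = (N - 2 * n) * kraw N n x := by
  set A := krawCoeff N n
  set T : ℕ → ℝ := fun m => 2 * (n - m) * A m * poch (-x) m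
  have telescope : ∀ m ∈ range n,
      (N - x) * (A (m + 1) * poch (-(x + 1)) (m + 1)) + x * (A (m + 1) * poch (-(x - 1)) (m + 1))
        - (N - 2 * n) * (A (m + 1) * poch (-x) (m + 1)) = T (m + 1) - T m := by
    intro m hm
    have hA := krawCoeff_succ_mul (N := N) (n := n) ((mem_range.mp hm).trans_le hn)
    have e₁ : poch (-(x + 1)) (m + 1) = (-x - 1) * poch (-x) m := by
      rw [poch_succ_eq_mul_poch_add_one]; ring_nf
    have e₂ : poch (-(x - 1)) (m + 1) * x = -(poch (-x) m * (-x + m) * (-x + (m + 1))) := by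
      have h := poch_succ_eq_mul_poch_add_one (-x) (m + 1)
      rw [poch_succ, poch_succ] at h
      rw [show -(x - 1) = -x + 1 by ring]
      push_cast at h
      linear_combination h
    simp only [T, poch_succ (-x) m, e₁]
    push_cast
    linear_combination (-(poch (-x) m)) * hA + A (m + 1) * e₂
  rw [kraw_eq_sum_krawCoeff, kraw_eq_sum_krawCoeff, kraw_eq_sum_krawCoeff, mul_sum, mul_sum,
    mul_sum, ← sub_eq_zero, ← sum_add_distrib, ← sum_sub_distrib, sum_range_succ',
    sum_congr rfl telescope, sum_range_sub]
  simp [T, A, krawCoeff_zero]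

theorem kraw_at_zero (N n : ℕ) : kraw N n 0 = 1 := by
  rw [kraw_eq_sum_krawCoeff, sum_range_succ']
  simp [poch_succ_eq_mul_poch_add_one, krawCoeff_zero]

theorem sum_choose_sum_choose_eq_pow {R : Type*} [CommRing R] (ℓ : ℕ) (z p q : R) :
    ∑ h ∈ range (ℓ + 1), (-1) ^ h * (ℓ.choose h : R) * z ^ h *
        ∑ j ∈ range (h + 1), (-1) ^ j * (h.choose j : R) * p ^ j * q ^ (ℓ - j) =
      (q - z * (q - p)) ^ ℓ := by
  have inner : ∀ h ∈ range (ℓ + 1),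
      ∑ j ∈ range (h + 1), (-1) ^ j * (h.choose j : R) * p ^ j * q ^ (ℓ - j) =
        (q - p) ^ h * q ^ (ℓ - h) := by
    intro h hh
    rw [sub_eq_neg_add, add_pow, sum_mul]
    refine sum_congr rfl fun j hj => ?_
    have hjh : j ≤ h := Nat.lt_succ_iff.mp (mem_range.mp hj)
    have hhℓ : h ≤ ℓ := Nat.lt_succ_iff.mp (mem_range.mp hh)
    rw [show ℓ - j = (h - j) + (ℓ - h) by omega, pow_add, neg_pow]
    ring
  rw [sum_congr rfl fun h hh => by rw [inner h hh],
    show q - z * (q - p) = -(z * (q - p)) + q by ring, add_pow]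
  refine sum_congr rfl fun h _ => ?_
  rw [neg_pow (z * (q - p)), mul_pow]
  ring

theorem one_sub_X_mul_derivative_pow {R : Type*} [CommRing R] (n : ℕ) :
    (1 - X) * derivative ((1 - X : R[X]) ^ n) = -(n : R[X]) * (1 - X) ^ n := by
  cases n with
  | zero => simp
  | succ n => rw [derivative_pow_succ]; simp; ring

theorem one_add_X_mul_derivative_pow {R : Type*} [CommSemiring R] (n : ℕ) :
    (1 + X) * derivative ((1 + X : R[X]) ^ n) = (n : R[X]) * (1 + X) ^ n := by
  cases n with
  | zero => simp
  | succ n => rw [derivative_pow_succ]; simp; ring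

noncomputable def krawGen (n m : ℕ) : ℝ[X] := (1 - X) ^ n * (1 + X) ^ m

theorem one_sub_X_sq_mul_derivative_krawGen (n m : ℕ) :
    (1 - X ^ 2) * derivative (krawGen n m) =
      ((m : ℝ[X]) - (n : ℝ[X]) - ((n : ℝ[X]) + (m : ℝ[X])) * X) * krawGen n m := by
  rw [krawGen, derivative_mul]
  linear_combination (1 + X) * (1 + X) ^ m * one_sub_X_mul_derivative_pow (R := ℝ) n +
    (1 - X) * (1 - X) ^ n * one_add_X_mul_derivative_pow (R := ℝ) m

theorem coeff_X_mul_derivative {R : Type*} [CommSemiring R] (p : R[X]) (n : ℕ) :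
    (X * derivative p).coeff n = n * p.coeff n := by
  cases n with
  | zero => simp
  | succ n => rw [coeff_X_mul, coeff_derivative]; push_cast; ring

theorem eq_of_two_step_recurrence {K : Type*} [Field K] [CharZero K] {N : ℕ} {c : K}
    {d : ℕ → K} {a b : ℕ → K}
    (h₀ : a 0 = b 0) (ha₁ : a 1 = c * a 0) (hb₁ : b 1 = c * b 0)
    (ha : ∀ x, x + 2 ≤ N → (x + 2) * a (x + 2) = c * a (x + 1) - d x * a x)
    (hb : ∀ x, x + 2 ≤ N → (x + 2) * b (x + 2) = c * b (x + 1) - d x * b x) :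
    ∀ x ≤ N, a x = b x := by
  intro x
  induction x using Nat.twoStepInduction with
  | zero => exact fun _ => h₀
  | one => exact fun _ => by rw [ha₁, hb₁, h₀]
  | more x ih₀ ih₁ =>
    intro hx
    refine mul_left_cancel₀ (by norm_cast : (x + 2 : K) ≠ 0) ?_
    rw [ha x hx, hb x hx, ih₀ (by omega), ih₁ (by omega)]

theorem krawGen_coeff_one (n m : ℕ) :
    (krawGen n m).coeff 1 = (m - n) * (krawGen n m).coeff 0 := by
  have h := congrArg (coeff · 0) (one_sub_X_sq_mul_derivative_krawGen n m)
  simp only [sub_mul, one_mul, add_mul, coeff_sub, coeff_add, pow_two, mul_assoc,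
    coeff_derivative, coeff_natCast_mul, coeff_X_mul_zero] at h
  linear_combination h

theorem krawGen_coeff_add_two (n m x : ℕ) :
    (x + 2) * (krawGen n m).coeff (x + 2) =
      (m - n) * (krawGen n m).coeff (x + 1) - (n + m - x) * (krawGen n m).coeff x := by
  have h := congrArg (coeff · (x + 1)) (one_sub_X_sq_mul_derivative_krawGen n m)
  simp only [sub_mul, one_mul, coeff_sub, pow_two, mul_assoc, coeff_X_mul, coeff_X_mul_derivative,
    coeff_derivative, coeff_natCast_mul, add_mul, coeff_add] at h
  push_cast at h
  linear_combination h

theorem choose_mul_kraw_eq_coeff_krawGen {N n x : ℕ} (hn : n ≤ N) (hx : x ≤ N) :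
    (N.choose x : ℝ) * kraw N n x = (krawGen n (N - n)).coeff x := by
  have hc : ((N - n : ℕ) : ℝ) - n = N - 2 * n := by push_cast [hn]; ring
  have hd : ∀ y : ℕ, (n : ℝ) + (N - n : ℕ) - y = N - y := fun y => by push_cast [hn]; ring
  refine eq_of_two_step_recurrence (K := ℝ) (c := N - 2 * n) (d := fun y => N - y)
    (a := fun y => (N.choose y : ℝ) * kraw N n y) ?_ ?_ ?_ ?_ ?_ x hx
  · simp [kraw_at_zero, krawGen, coeff_zero_eq_eval_zero]
  · simpa using kraw_difference_eq N n hn 0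
  · rw [krawGen_coeff_one, hc]
  · intro y hy
    have h := kraw_difference_eq N n hn (y + 1)
    have h₁ : (N.choose (y + 1) : ℝ) * (N - (y + 1)) = N.choose (y + 2) * (y + 2) := by
      have := congrArg (Nat.cast : ℕ → ℝ) (Nat.choose_succ_right_eq N (y + 1))
      push_cast [show y + 1 ≤ N by omega] at this
      linear_combination -this
    have h₂ : (N.choose (y + 1) : ℝ) * (y + 1) = N.choose y * (N - y) := by
      have := congrArg (Nat.cast : ℕ → ℝ) (Nat.choose_succ_right_eq N y)
      push_cast [show y ≤ N by omega] at this
      exact this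
    push_cast
    rw [show (y : ℝ) + 1 + 1 = y + 2 by ring, show (y : ℝ) + 1 - 1 = y by ring] at h
    linear_combination (N.choose (y + 1) : ℝ) * h - kraw N n (y + 2) * h₁ - kraw N n y * h₂
  · intro y _
    rw [krawGen_coeff_add_two, hc, hd]

theorem choose_mul_Scol_eq_coeff {ℓ k : ℕ} (hk : k ≤ 2 * ℓ) (y : ℝ) :
    ((2 * ℓ).choose k : ℝ) * Scol ℓ k y = ((1 + C (2 * (1 - 2 * y)) * X + X ^ 2) ^ ℓ).coeff k := by
  have key := congrArg (coeff · k)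
    (sum_choose_sum_choose_eq_pow ℓ (C y) ((1 - X) ^ 2) ((1 + X) ^ 2))
  simp only [finsetSum_coeff, ← C_pow, ← map_natCast C, ← C_1, ← C_neg, ← C_mul, mul_assoc,
    coeff_C_mul] at key
  simp only [map_one] at key
  have hpoly : (1 + X) ^ 2 - C y * ((1 + X) ^ 2 - (1 - X) ^ 2) =
      1 + C (2 * (1 - 2 * y)) * X + X ^ 2 := by
    simp only [map_mul, map_sub, map_one, map_ofNat]
    ring
  have hkraw : ∀ j ≤ ℓ, (((1 - X : ℝ[X]) ^ 2) ^ j * ((1 + X) ^ 2) ^ (ℓ - j)).coeff k =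
      (2 * ℓ).choose k * kraw (2 * ℓ) (2 * j) k := fun j hj => by
    rw [choose_mul_kraw_eq_coeff_krawGen (by omega) hk, krawGen, ← pow_mul, ← pow_mul,
      show 2 * (ℓ - j) = 2 * ℓ - 2 * j by omega]
  rw [hpoly] at key
  rw [← key, Scol, mul_sum]
  refine sum_congr rfl fun h hh => ?_
  conv_rhs => rw [sum_congr rfl fun j hj => by rw [hkraw j (by grind)]]
  simp only [mul_sum, sum_mul]
  exact sum_congr rfl fun j _ => by ring

def genCoeff (ℓ k b : ℕ) : ℕ :=
  if b ≤ k ∧ 2 ∣ k - b then ℓ.choose b * 2 ^ b * (ℓ - b).choose ((k - b) / 2) else 0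

theorem coeff_one_add_C_mul_X_add_X_sq_pow (ℓ k : ℕ) (u : ℝ) :
    ((1 + C (2 * u) * X + X ^ 2) ^ ℓ).coeff k =
      ∑ b ∈ range (ℓ + 1), (genCoeff ℓ k b : ℝ) * u ^ b := by
  rw [show 1 + C (2 * u) * X + X ^ 2 = C (2 * u) * X + expand ℝ 2 (1 + X) by simp; ring, add_pow,
    finsetSum_coeff]
  refine sum_congr rfl fun b _ => ?_
  rw [show (C (2 * u) * X) ^ b * expand ℝ 2 (1 + X) ^ (ℓ - b) * (ℓ.choose b : ℝ[X]) =
      C ((2 * u) ^ b * ℓ.choose b) * (X ^ b * expand ℝ 2 ((1 + X) ^ (ℓ - b))) by simp; ring,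
    coeff_C_mul, coeff_X_pow_mul', coeff_expand two_pos, coeff_one_add_X_pow, genCoeff]
  split_ifs <;> first | tauto | (push_cast; ring)

theorem sum_range_eq_sum_range_two_mul_add {M : Type*} [AddCommMonoid M] {F : ℕ → M} {n r : ℕ}
    (hr : r < 2) (hF : ∀ b, b % 2 ≠ r ∨ n < b → F b = 0) :
    ∑ b ∈ range (n + 1), F b = ∑ j ∈ range (n + 1), F (2 * j + r) := by
  have hsub : ∑ b ∈ range (n + 1), F b = ∑ b ∈ range (2 * n + 2), F b :=
    sum_subset (range_subset_range.mpr (by omega))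
      fun b _ hb => hF b (Or.inr (by simpa using hb))
  rw [hsub, ← sum_image fun a _ b _ (h : 2 * a + r = 2 * b + r) => by omega]
  refine (sum_subset (fun b hb => ?_) fun b hb hb' => hF b ?_).symm
  · obtain ⟨j, hj, rfl⟩ := mem_image.mp hb
    simp only [mem_range] at hj ⊢
    omega
  · by_contra! h
    exact hb' (mem_image.mpr ⟨b / 2, by simp only [mem_range] at hb ⊢; omega, by omega⟩)

theorem genCoeff_eq_zero {ℓ k b : ℕ} (h : b % 2 ≠ k % 2 ∨ ℓ < b) : genCoeff ℓ k b = 0 := by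
  rw [genCoeff]
  split_ifs with hb
  · rcases h with h | h
    · omega
    · rw [Nat.choose_eq_zero_of_lt h, zero_mul, zero_mul]
  · rfl

noncomputable def ScolCoeff (ℓ k j : ℕ) : ℝ := genCoeff ℓ k (2 * j + k % 2) / (2 * ℓ).choose k

theorem ScolCoeff_nonneg (ℓ k j : ℕ) : 0 ≤ ScolCoeff ℓ k j := by
  unfold ScolCoeff
  positivity

theorem Scol_eq_sum {ℓ k : ℕ} (hk : k ≤ 2 * ℓ) (y : ℝ) :
    Scol ℓ k y = (1 - 2 * y) ^ (k % 2) *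
      ∑ j ∈ range (ℓ + 1), ScolCoeff ℓ k j * (1 - 2 * y) ^ (2 * j) := by
  have hC : ((2 * ℓ).choose k : ℝ) ≠ 0 := by exact_mod_cast (Nat.choose_pos hk).ne'
  rw [← mul_right_inj' hC, choose_mul_Scol_eq_coeff hk, coeff_one_add_C_mul_X_add_X_sq_pow,
    sum_range_eq_sum_range_two_mul_add (Nat.mod_lt k two_pos)
      fun b hb => by rw [genCoeff_eq_zero hb, Nat.cast_zero, zero_mul],
    mul_sum, mul_sum]
  refine sum_congr rfl fun j _ => ?_
  rw [ScolCoeff]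
  field_simp
  ring

theorem sum_ScolCoeff_mul_pow_two_mul_nonneg (ℓ k : ℕ) (u : ℝ) :
    0 ≤ ∑ j ∈ range (ℓ + 1), ScolCoeff ℓ k j * u ^ (2 * j) :=
  sum_nonneg fun j _ => mul_nonneg (ScolCoeff_nonneg ℓ k j) ((even_two_mul j).pow_nonneg u)

theorem one_sub_two_mul_mul_Scol_succ_div_Scol_nonneg {ℓ k : ℕ} (hk : k + 1 ≤ 2 * ℓ) (y : ℝ) :
    0 ≤ (1 - 2 * y) * (Scol ℓ (k + 1) y / Scol ℓ k y) := by
  have hA := sum_ScolCoeff_mul_pow_two_mul_nonneg ℓ k (1 - 2 * y)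
  have hB := sum_ScolCoeff_mul_pow_two_mul_nonneg ℓ (k + 1) (1 - 2 * y)
  rw [Scol_eq_sum hk, Scol_eq_sum (by omega)]
  rcases Nat.mod_two_eq_zero_or_one k with h | h
  · rw [h, show (k + 1) % 2 = 1 by omega, pow_zero, pow_one, one_mul, ← mul_div_assoc, ← mul_assoc]
    exact div_nonneg (mul_nonneg (mul_self_nonneg _) hB) hA
  · rw [h, show (k + 1) % 2 = 0 by omega, pow_zero, pow_one, one_mul]
    rcases eq_or_ne (1 - 2 * y) 0 with hu | hu
    · rw [hu, zero_mul]
    · rw [← mul_div_assoc, mul_div_mul_left _ _ hu]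
      exact div_nonneg hB hA

/-- in the basis `{(1-2y)^j}` the polynomial `S_k` has nonnegative coefficients
(for `k` even it is a polynomial in `(1-2y)²` with nonnegative coefficients; for `k` odd it is
`(1-2y)` times such a polynomial); consequently the ratio `S_{k+1}/S_k` is nonnegative on
`[0,1/2)` and nonpositive on `(1/2,1]`. -/
theorem Scol_sign_structure (ℓ : ℕ) (hℓ : 1 ≤ ℓ) :
    (∀ k ≤ 2 * ℓ, ∃ α : ℕ → ℝ, (∀ j, 0 ≤ α j) ∧
      (Even k → ∀ y : ℝ, Scol ℓ k y = ∑ j ∈ Finset.range (ℓ + 1), α j * (1 - 2 * y) ^ (2 * j)) ∧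
      (Odd k → ∀ y : ℝ,
        Scol ℓ k y = (1 - 2 * y) * ∑ j ∈ Finset.range (ℓ + 1), α j * (1 - 2 * y) ^ (2 * j))) ∧
    (∀ k, k ≤ 2 * ℓ - 1 → ∀ y : ℝ,
      (y ∈ Set.Ico (0 : ℝ) (1 / 2) → 0 ≤ Scol ℓ (k + 1) y / Scol ℓ k y) ∧
      (y ∈ Set.Ioc (1 / 2 : ℝ) 1 → Scol ℓ (k + 1) y / Scol ℓ k y ≤ 0)) := by
  refine ⟨fun k hk => ⟨ScolCoeff ℓ k, ScolCoeff_nonneg ℓ k, fun he y => ?_, fun ho y => ?_⟩,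
    fun k hk y => ?_⟩
  · rw [Scol_eq_sum hk, Nat.even_iff.mp he, pow_zero, one_mul]
  · rw [Scol_eq_sum hk, Nat.odd_iff.mp ho, pow_one]
  · have h := one_sub_two_mul_mul_Scol_succ_div_Scol_nonneg (show k + 1 ≤ 2 * ℓ by omega) y
    exact ⟨fun ⟨_, hy⟩ => nonneg_of_mul_nonneg_right h (by linarith),
      fun ⟨hy, _⟩ => nonpos_of_mul_nonneg_right h (by linarith)⟩
end
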